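/- arXiv:1802.00325 — 5 statements merged into one kernel-verified Lean document; each statement's English description precedes it below -/
import Mathlib

section
/- Let k ≥ 2 be an integer, let x : ℕ → A be a k-automatic sequence over a finite alphabet A (i.e., its k-kernel is finite), and let a : ℕ → ℤ be the Sturmian sequence defined by a(n) = ⌊(n+1)α + β⌋ − ⌊nα + β⌋ for an irrational α with 0 < α < 1 and a real β with 0 ≤ β < 1 (so a takes values in {0,1} ⊆ A). Then there exists a constant C (depending on x and a) such that whenever x and a have a factor in common of length n — i.e., there exist indices i, j with x(i+t) = a(j+t) for all t < n — one has n ≤ C. -/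
/-!
Suppose the common factors were unbounded. The map `g ↦ (n ↦ g (n * k))` acts on the finite
`k`-kernel, so some power `p ≥ 1` of it is idempotent; put `K = k ^ p`. A long common factor
contains a block of `x` aligned at a multiple of `K ^ (i + 1)` that is a factor of `a`. By
idempotence, the sums of `x` over its initial subblocks of lengths `K ^ t` (`t ≤ i`) are the
block sums `u t` of `x` at a fixed index `m`, and by the Sturmian block sum formula they equal
`⌊K ^ t * α + θ⌋`. Since `u` depends only on the kernel values at `m`, one `u` serves every `i`.

These block-sum sequences span a finite-dimensional shift-invariant space, so the bounded integer
sequence `w t = u (t + 1) - K * u t` satisfies a linear recurrence and is eventually periodic.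
Then `v t = u (t + P) - u t` is eventually geometric with ratio `K`, while it stays within `1` of
`(K ^ (t + P) - K ^ t) * α`; this forces `α` to be rational.
-/

open Finset

theorem Set.Finite.exists_mem_forall_of_antitone {β : Type*} {s : Set β} (hs : s.Finite)
    {P : ℕ → β → Prop} (hP : ∀ b, Antitone fun i => P i b) (h : ∀ i, ∃ b ∈ s, P i b) :
    ∃ b ∈ s, ∀ i, P i b := by
  by_contra! hne
  choose! N hN using hne
  obtain ⟨b, hb, hPb⟩ := h (hs.toFinset.sup N)
  exact hN b hb (hP b (le_sup (hs.mem_toFinset.mpr hb)) hPb)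

theorem exists_pos_isIdempotentElem_pow {M : Type*} [Monoid M] [Finite M] (a : M) :
    ∃ p, 0 < p ∧ IsIdempotentElem (a ^ p) := by
  obtain ⟨m, n, hmn, hamn⟩ := Set.finite_univ.exists_lt_map_eq_of_forall_mem
    (f := fun n : ℕ => a ^ n) fun _ => Set.mem_univ _
  have hper : ∀ i j, m ≤ i → a ^ (i + j * (n - m)) = a ^ i := by
    intro i j hi
    induction j with
    | zero => simp
    | succ j ih =>
      calc a ^ (i + (j + 1) * (n - m)) = a ^ (i - m) * a ^ n * a ^ (j * (n - m)) := by
            rw [← pow_add, ← pow_add]; congr 1; rw [add_mul]; omega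
        _ = a ^ (i + j * (n - m)) := by
            rw [← hamn, ← pow_add, ← pow_add]; congr 1; omega
        _ = a ^ i := ih
  refine ⟨(m + 1) * (n - m), Nat.mul_pos m.succ_pos (by omega), ?_⟩
  rw [IsIdempotentElem, ← pow_add]
  exact hper _ _ (Nat.le_mul_of_pos_right _ (by omega) |>.trans' (by omega))

namespace LinearRecurrence

theorem exists_isSolution_of_mem_span {K : Type*} [Field K] {S : Set (ℕ → K)} (hS : S.Finite)
    (hshift : ∀ f ∈ S, (fun n => f (n + 1)) ∈ Submodule.span K S) {w : ℕ → K}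
    (hw : w ∈ Submodule.span K S) : ∃ E : LinearRecurrence K, E.IsSolution w := by
  set V := Submodule.span K S
  let σ : Module.End K (ℕ → K) := LinearMap.funLeft K K (· + 1)
  have hσ : ∀ f ∈ V, σ f ∈ V := fun f hf => (Submodule.span_le (p := V.comap σ)).mpr hshift hf
  have hσpow : ∀ j (f : ℕ → K) n, (σ ^ j) f n = f (n + j) := by
    intro j
    induction j with
    | zero => simp
    | succ j ih => intro f n; rw [pow_succ, Module.End.mul_apply, ih]; rfl
  have : FiniteDimensional K V := FiniteDimensional.span_of_finite K hS
  set χ := (σ.restrict hσ).charpoly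
  have hχ : ∀ n, ∑ j ∈ range (χ.natDegree + 1), χ.coeff j * w (n + j) = 0 := by
    intro n
    have h0 := congrArg (fun T : Module.End K V => ((T ⟨w, hw⟩ : V) : ℕ → K) n)
      (LinearMap.aeval_self_charpoly (σ.restrict hσ))
    have hpow : ∀ j, (((σ.restrict hσ) ^ j) ⟨w, hw⟩ : ℕ → K) = (σ ^ j) w := fun j => by
      rw [Module.End.pow_restrict]; rfl
    simpa [Polynomial.aeval_eq_sum_range, hpow, hσpow] using h0
  refine ⟨⟨χ.natDegree, fun j => -χ.coeff j⟩, fun n => ?_⟩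
  have := hχ n
  rw [sum_range_succ, (LinearMap.charpoly_monic _).coeff_natDegree, one_mul] at this
  simp only [neg_mul, sum_neg_distrib, ← sum_range fun j => χ.coeff j * w (n + j)]
  exact eq_neg_of_add_eq_zero_right this

theorem IsSolution.exists_periodic {R : Type*} [CommSemiring R] {E : LinearRecurrence R}
    {u : ℕ → R} (hu : E.IsSolution u) (hfin : (Set.range u).Finite) :
    ∃ i₀ P, 0 < P ∧ ∀ n ≥ i₀, u (n + P) = u n := by
  have hshift : ∀ i, E.IsSolution fun n => u (i + n) := fun i n => by
    simpa only [add_assoc] using hu (i + n)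
  obtain ⟨i₁, i₂, hlt, hwin⟩ := (Set.Finite.pi (t := fun _ : Fin E.order => Set.range u)
    fun _ => hfin).exists_lt_map_eq_of_forall_mem (f := fun i (l : Fin E.order) => u (i + l))
    fun i => Set.mem_univ_pi.mpr fun l => Set.mem_range_self (i + l)
  have heq : (fun n => u (i₁ + n)) = fun n => u (i₂ + n) := by
    rw [E.eq_mk_of_is_sol_of_eq_init' (hshift i₁) fun l => rfl,
      E.eq_mk_of_is_sol_of_eq_init' (hshift i₂) fun l => congrFun hwin.symm l]
  refine ⟨i₁, i₂ - i₁, by omega, fun n hn => ?_⟩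
  have := congrFun heq (n - i₁)
  rw [show i₁ + (n - i₁) = n by omega, show i₂ + (n - i₁) = n + (i₂ - i₁) by omega] at this
  exact this.symm

end LinearRecurrence

theorem sum_range_sturmian (α β : ℝ) (a : ℕ → ℤ)
    (ha : ∀ n : ℕ, a n = ⌊((n : ℝ) + 1) * α + β⌋ - ⌊(n : ℝ) * α + β⌋) (j L : ℕ) :
    ∑ t ∈ range L, a (j + t) = ⌊(L : ℝ) * α + Int.fract ((j : ℝ) * α + β)⌋ := by
  set y := (j : ℝ) * α + β
  have hfloor : ∀ t : ℕ, ⌊((j + t : ℕ) : ℝ) * α + β⌋ = ⌊(t : ℝ) * α + Int.fract y⌋ + ⌊y⌋ := by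
    intro t
    rw [← Int.floor_add_intCast, add_assoc, Int.fract_add_floor]
    congr 1; push_cast; ring
  have hstep : ∀ t,
      a (j + t) = ⌊((t + 1 : ℕ) : ℝ) * α + Int.fract y⌋ - ⌊(t : ℝ) * α + Int.fract y⌋ := by
    intro t
    rw [ha, show ((j + t : ℕ) : ℝ) + 1 = ((j + (t + 1) : ℕ) : ℝ) by push_cast; ring,
      hfloor, hfloor]
    ring
  rw [sum_congr rfl fun t _ => hstep t, sum_range_sub (fun t : ℕ => ⌊(t : ℝ) * α + Int.fract y⌋)]
  simp [Int.floor_fract]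

theorem eq_zero_of_forall_abs_pow_mul_lt_one {K c : ℝ} (hK : 1 < K)
    (h : ∀ n : ℕ, |K ^ n * c| < 1) : c = 0 := by
  by_contra hc
  obtain ⟨n, hn⟩ := pow_unbounded_of_one_lt |c|⁻¹ hK
  have := h n
  rw [abs_mul, abs_of_pos (pow_pos (by linarith) n)] at this
  exact this.not_gt ((inv_lt_iff_one_lt_mul₀ (abs_pos.mpr hc)).mp hn)

def FloorPowOnSegments (K : ℕ) (α : ℝ) (u : ℕ → ℤ) : Prop :=
  ∀ i, ∃ θ ∈ Set.Ico (0 : ℝ) 1, ∀ t ≤ i, u t = ⌊(K : ℝ) ^ t * α + θ⌋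

namespace FloorPowOnSegments

variable {K : ℕ} {α : ℝ} {u : ℕ → ℤ}

theorem abs_sub_sub_lt (hu : FloorPowOnSegments K α u) (n P : ℕ) :
    |((u (n + P) - u n : ℤ) : ℝ) - ((K : ℝ) ^ (n + P) - (K : ℝ) ^ n) * α| < 1 := by
  obtain ⟨θ, -, hθ⟩ := hu (n + P)
  rw [hθ n (by omega), hθ (n + P) le_rfl]
  have h1 := Int.floor_le ((K : ℝ) ^ (n + P) * α + θ)
  have h2 := Int.lt_floor_add_one ((K : ℝ) ^ (n + P) * α + θ)
  have h3 := Int.floor_le ((K : ℝ) ^ n * α + θ)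
  have h4 := Int.lt_floor_add_one ((K : ℝ) ^ n * α + θ)
  rw [abs_sub_lt_iff]
  push_cast
  constructor <;> linarith

theorem abs_succ_sub_mul_lt (hu : FloorPowOnSegments K α u) (hK : 1 ≤ K) (t : ℕ) :
    |((u (t + 1) - K * u t : ℤ) : ℝ)| < K := by
  obtain ⟨θ, ⟨hθ0, hθ1⟩, hθ⟩ := hu (t + 1)
  rw [hθ t (by omega), hθ (t + 1) le_rfl, pow_succ, mul_right_comm]
  set y := (K : ℝ) ^ t * α
  have h1 := Int.floor_le (y * K + θ)
  have h2 := Int.lt_floor_add_one (y * K + θ)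
  have h3 := Int.floor_le (y + θ)
  have h4 := Int.lt_floor_add_one (y + θ)
  have hK' : (1 : ℝ) ≤ K := by exact_mod_cast hK
  have hθK : 0 ≤ θ * ((K : ℝ) - 1) := mul_nonneg hθ0 (by linarith)
  have hθK' : θ * ((K : ℝ) - 1) ≤ (K : ℝ) - 1 := mul_le_of_le_one_left (by linarith) hθ1.le
  have h5 := mul_le_mul_of_nonneg_left h3 (by linarith : (0 : ℝ) ≤ K)
  have h6 := mul_lt_mul_of_pos_left h4 (by linarith : (0 : ℝ) < K)
  rw [abs_lt]
  push_cast
  constructor <;> linarith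

theorem not_irrational_of_periodic (hu : FloorPowOnSegments K α u) (hK : 2 ≤ K) {i₀ P : ℕ}
    (hP : 0 < P) (hper : ∀ n ≥ i₀, u (n + P + 1) - K * u (n + P) = u (n + 1) - K * u n) :
    ¬ Irrational α := by
  set v : ℕ → ℤ := fun n => u (n + P) - u n
  have hv : ∀ n, v (i₀ + n) = (K : ℤ) ^ n * v i₀ := by
    intro n
    induction n with
    | zero => simp
    | succ n ih =>
      show u (i₀ + (n + 1) + P) - u (i₀ + (n + 1)) = K ^ (n + 1) * (u (i₀ + P) - u i₀)
      rw [show i₀ + (n + 1) + P = i₀ + n + P + 1 by omega, ← add_assoc]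
      linear_combination hper (i₀ + n) (by omega) + K * ih
  have hc : ((v i₀ : ℤ) : ℝ) - ((K : ℝ) ^ (i₀ + P) - (K : ℝ) ^ i₀) * α = 0 := by
    refine eq_zero_of_forall_abs_pow_mul_lt_one (by exact_mod_cast hK : (1 : ℝ) < K) fun n => ?_
    have := hu.abs_sub_sub_lt (i₀ + n) P
    rw [show u (i₀ + n + P) - u (i₀ + n) = v (i₀ + n) from rfl, hv n] at this
    convert this using 2
    push_cast
    ring
  intro hα
  have hD : (K : ℤ) ^ (i₀ + P) - (K : ℤ) ^ i₀ ≠ 0 :=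
    sub_ne_zero.mpr (pow_lt_pow_right₀ (by omega) (by omega)).ne'
  apply (hα.intCast_mul hD).ne_int (v i₀)
  push_cast
  linarith

theorem not_irrational_of_isSolution (hu : FloorPowOnSegments K α u) (hK : 2 ≤ K)
    {E : LinearRecurrence ℚ} (hE : E.IsSolution fun t => ((u (t + 1) - K * u t : ℤ) : ℚ)) :
    ¬ Irrational α := by
  have hfin : (Set.range fun t => ((u (t + 1) - K * u t : ℤ) : ℚ)).Finite := by
    refine ((Set.finite_Icc (-(K : ℤ)) K).image (↑)).subset ?_
    rintro _ ⟨t, rfl⟩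
    have := abs_lt.mp (hu.abs_succ_sub_mul_lt (by omega) t)
    exact ⟨_, ⟨by exact_mod_cast this.1.le, by exact_mod_cast this.2.le⟩, rfl⟩
  obtain ⟨i₀, P, hP, hper⟩ := hE.exists_periodic hfin
  exact hu.not_irrational_of_periodic hK hP fun n hn => by exact_mod_cast hper n hn

end FloorPowOnSegments

theorem exists_aligned_block_eq {A : Type*} {y z : ℕ → A} {L n i j : ℕ} (hL : 0 < L)
    (hn : 2 * L ≤ n) (h : ∀ t < n, y (i + t) = z (j + t)) :
    ∃ M j', ∀ s < L, y (M * L + s) = z (j' + s) := by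
  have hlo : i / L * L ≤ i := Nat.div_mul_le_self i L
  have hhi : i < i / L * L + L := Nat.lt_div_mul_add hL
  refine ⟨i / L + 1, j + ((i / L + 1) * L - i), fun s hs => ?_⟩
  have := h ((i / L + 1) * L - i + s) (by rw [add_mul]; omega)
  rwa [← add_assoc, add_tsub_cancel_of_le (by rw [add_mul]; omega), ← add_assoc] at this

theorem sum_range_mul_eq_sum_sum {M : Type*} [AddCommMonoid M] (f : ℕ → M) (L L' : ℕ) :
    ∑ t ∈ range (L * L'), f t = ∑ c ∈ range L', ∑ s ∈ range L, f (c * L + s) := by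
  induction L' with
  | zero => simp
  | succ L' ih => rw [Nat.mul_succ, sum_range_add, ih, sum_range_succ, mul_comm L L']

def blockSum {M : Type*} [AddCommMonoid M] (x : ℕ → M) (L m : ℕ) : M :=
  ∑ t ∈ range L, x (m * L + t)

theorem blockSum_mul {M : Type*} [AddCommMonoid M] (x : ℕ → M) (L L' m : ℕ) :
    blockSum x (L * L') m = ∑ c ∈ range L', blockSum x L (m * L' + c) := by
  rw [blockSum, sum_range_mul_eq_sum_sum]
  refine sum_congr rfl fun c _ => sum_congr rfl fun s _ => ?_
  congr 1
  ring

def kKernel {A : Type*} (k : ℕ) (x : ℕ → A) : Set (ℕ → A) :=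
  {g | ∃ r s : ℕ, s < k ^ r ∧ g = fun n => x (n * k ^ r + s)}

namespace kKernel

variable {A : Type*} {k : ℕ} {x : ℕ → A}

theorem mem_of_lt {r s : ℕ} (hs : s < k ^ r) : (fun n => x (n * k ^ r + s)) ∈ kKernel k x :=
  ⟨r, s, hs, rfl⟩

theorem finite_range (hk : 1 < k) (h : (kKernel k x).Finite) : (Set.range x).Finite := by
  refine (h.image fun g => g 0).subset ?_
  rintro _ ⟨m, rfl⟩
  exact ⟨_, mem_of_lt (r := m) (s := m) (Nat.lt_pow_self hk), by simp⟩

theorem finite_range_eval (hk : 1 < k) (h : (kKernel k x).Finite) :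
    (Set.range fun m (g : kKernel k x) => (g : ℕ → A) m).Finite := by
  have := h.to_subtype
  refine (Set.Finite.pi (t := fun _ : kKernel k x => Set.range x)
    fun _ => finite_range hk h).subset ?_
  rintro _ ⟨m, rfl⟩ ⟨g, r, s, -, rfl⟩ -
  exact ⟨_, rfl⟩

def decimation (hk : 0 < k) : Function.End (kKernel k x) := fun g =>
  ⟨fun n => (g : ℕ → A) (n * k), by
    obtain ⟨r, s, hs, hg⟩ := g.2
    refine ⟨r + 1, s, hs.trans_le (Nat.pow_le_pow_right hk r.le_succ), ?_⟩
    rw [hg, pow_succ]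
    simp only [mul_assoc, mul_comm k]⟩

theorem decimation_pow_apply (hk : 0 < k) (e : ℕ) (g : kKernel k x) (n : ℕ) :
    ((decimation hk ^ e) g : ℕ → A) n = (g : ℕ → A) (n * k ^ e) := by
  induction e generalizing g with
  | zero => simp only [pow_zero, mul_one]; rfl
  | succ e ih =>
    rw [pow_succ]
    exact (ih _).trans (by simp [decimation, pow_succ, mul_assoc])

theorem exists_pos_apply_mul_pow_succ_eq (hk : 0 < k) (h : (kKernel k x).Finite) :
    ∃ p, 0 < p ∧ ∀ g ∈ kKernel k x, ∀ m n, g (m * (k ^ p) ^ (n + 1)) = g (m * k ^ p) := by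
  have := h.to_subtype
  have : Finite (Function.End (kKernel k x)) :=
    inferInstanceAs (Finite (kKernel k x → kKernel k x))
  obtain ⟨p, hp, hidem⟩ := exists_pos_isIdempotentElem_pow (decimation (x := x) hk)
  refine ⟨p, hp, fun g hg m n => ?_⟩
  have := congrArg (fun f : Function.End (kKernel k x) => ((f ⟨g, hg⟩ : kKernel k x) : ℕ → A) m)
    (hidem.pow_succ_eq n)
  simpa only [← pow_mul, decimation_pow_apply] using this

theorem finite_range_blockSum_pow {M : Type*} [AddCommMonoid M] {x : ℕ → M} (hk : 1 < k)
    (h : (kKernel k x).Finite) (p : ℕ) :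
    (Set.range fun m t => blockSum x ((k ^ p) ^ t) m).Finite := by
  let Φ : (kKernel k x → M) → ℕ → M := fun v t =>
    ∑ s ∈ (range (k ^ (p * t))).attach, v ⟨_, mem_of_lt (mem_range.mp s.2)⟩
  refine ((finite_range_eval hk h).image Φ).subset ?_
  rintro _ ⟨m, rfl⟩
  refine ⟨_, ⟨m, rfl⟩, funext fun t => ?_⟩
  simp only [Φ, blockSum, ← pow_mul]
  exact sum_attach (range _) fun s => x (m * k ^ (p * t) + s)

theorem blockSum_mul_pow_eq {M : Type*} [AddCommMonoid M] {x : ℕ → M} {p : ℕ}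
    (hidem : ∀ g ∈ kKernel k x, ∀ m n, g (m * (k ^ p) ^ (n + 1)) = g (m * k ^ p))
    (m : ℕ) {i t : ℕ} (ht : t ≤ i) :
    blockSum x ((k ^ p) ^ t) (m * k ^ p) =
      ∑ s ∈ range ((k ^ p) ^ t), x (m * (k ^ p) ^ (i + 1) + s) := by
  refine sum_congr rfl fun s hs => ?_
  rw [mem_range, ← pow_mul] at hs
  have := hidem _ (mem_of_lt hs) m (i - t)
  rw [pow_mul] at this
  rw [← this, mul_assoc, ← pow_add, show i - t + 1 + t = i + 1 by omega]

theorem exists_isSolution_blockSum_pow {x : ℕ → ℤ} (hk : 1 < k) (h : (kKernel k x).Finite)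
    (p m : ℕ) (c : ℤ) :
    ∃ E : LinearRecurrence ℚ, E.IsSolution fun t =>
      ((blockSum x ((k ^ p) ^ (t + 1)) m - c * blockSum x ((k ^ p) ^ t) m : ℤ) : ℚ) := by
  set S : Set (ℕ → ℚ) := Set.range fun m t => ((blockSum x ((k ^ p) ^ t) m : ℤ) : ℚ)
  have hS : S.Finite := by
    have := (finite_range_blockSum_pow hk h p).image fun f t => (f t : ℚ)
    rwa [← Set.range_comp] at this
  have hmem : ∀ m, (fun t => ((blockSum x ((k ^ p) ^ t) m : ℤ) : ℚ)) ∈ Submodule.span ℚ S :=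
    fun m => Submodule.subset_span ⟨m, rfl⟩
  have hshift : ∀ f ∈ S, (fun t => f (t + 1)) ∈ Submodule.span ℚ S := by
    rintro _ ⟨m, rfl⟩
    have : (fun t => ((blockSum x ((k ^ p) ^ (t + 1)) m : ℤ) : ℚ)) =
        ∑ c ∈ range (k ^ p), fun t => ((blockSum x ((k ^ p) ^ t) (m * k ^ p + c) : ℤ) : ℚ) := by
      funext t
      rw [pow_succ, blockSum_mul, Finset.sum_apply]
      push_cast
      rfl
    exact this ▸ Submodule.sum_mem _ fun c _ => hmem _
  refine LinearRecurrence.exists_isSolution_of_mem_span hS hshift ?_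
  convert Submodule.sub_mem _ (hshift _ ⟨m, rfl⟩) (Submodule.smul_mem _ (c : ℚ) (hmem m)) using 1
  funext t
  push_cast
  rfl

end kKernel

theorem automatic_sturmian_common_factor_bounded_general
    (k : ℕ) (hk : 2 ≤ k)
    (x : ℕ → ℤ)
    (hkernel : {g : ℕ → ℤ | ∃ r s : ℕ, s < k ^ r ∧
        g = fun n => x (n * k ^ r + s)}.Finite)
    (α β : ℝ) (hα : Irrational α)
    (a : ℕ → ℤ)
    (ha : ∀ n : ℕ, a n = ⌊((n : ℝ) + 1) * α + β⌋ - ⌊(n : ℝ) * α + β⌋) :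
    ∃ C : ℕ, ∀ (n i j : ℕ), (∀ t < n, x (i + t) = a (j + t)) → n ≤ C := by
  by_contra! hlong
  change (kKernel k x).Finite at hkernel
  obtain ⟨p, hp, hidem⟩ := kKernel.exists_pos_apply_mul_pow_succ_eq (by omega) hkernel
  have hK : 2 ≤ k ^ p := hk.trans (Nat.le_self_pow hp.ne' k)
  have hseg : ∀ i, ∃ f ∈ Set.range fun m t => blockSum x ((k ^ p) ^ t) m,
      ∃ θ ∈ Set.Ico (0 : ℝ) 1, ∀ t ≤ i, f t = ⌊((k ^ p : ℕ) : ℝ) ^ t * α + θ⌋ := by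
    intro i
    obtain ⟨n, _, _, hmatch, hn⟩ := hlong (2 * (k ^ p) ^ (i + 1))
    obtain ⟨M, j', hM⟩ := exists_aligned_block_eq (by positivity) hn.le hmatch
    refine ⟨_, ⟨M * k ^ p, rfl⟩, Int.fract ((j' : ℝ) * α + β),
      ⟨Int.fract_nonneg _, Int.fract_lt_one _⟩, fun t ht => ?_⟩
    dsimp only
    rw [kKernel.blockSum_mul_pow_eq hidem M ht, sum_congr rfl fun s hs => hM s ?_,
      sum_range_sturmian α β a ha]
    · push_cast; rfl
    · exact (mem_range.mp hs).trans_le (Nat.pow_le_pow_right (by omega) (by omega))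
  obtain ⟨_, ⟨m, rfl⟩, hu⟩ :=
    (kKernel.finite_range_blockSum_pow (by omega) hkernel p).exists_mem_forall_of_antitone
      (fun f i i' hii' ⟨θ, hθ, h⟩ => ⟨θ, hθ, fun t ht => h t (ht.trans hii')⟩) hseg
  obtain ⟨E, hE⟩ := kKernel.exists_isSolution_blockSum_pow (by omega) hkernel p m (k ^ p : ℕ)
  exact FloorPowOnSegments.not_irrational_of_isSolution hu hK hE hα

/-- **Main theorem (general Sturmian version).**
Let `k ≥ 2`, let `x : ℕ → ℤ` be a sequence over a finite alphabet
(`Set.range x` is finite) whose `k`-kernel is finite (i.e. `x` is `k`-automatic),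
and let `a` be the Sturmian sequence `a n = ⌊(n+1)α + β⌋ - ⌊nα + β⌋` with `α`
irrational, `0 < α < 1`, `0 ≤ β < 1` (its values lie in `{0,1} ⊆ ℤ`).
Then there is a constant `C` such that any common factor of `x` and `a`
has length at most `C`. -/
theorem automatic_sturmian_common_factor_bounded
    (k : ℕ) (hk : 2 ≤ k)
    (x : ℕ → ℤ) (hfin : (Set.range x).Finite)
    (hkernel : {g : ℕ → ℤ | ∃ r s : ℕ, s < k ^ r ∧
        g = fun n => x (n * k ^ r + s)}.Finite)
    (α β : ℝ) (hα : Irrational α) (hα0 : 0 < α) (hα1 : α < 1)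
    (hβ0 : 0 ≤ β) (hβ1 : β < 1)
    (a : ℕ → ℤ)
    (ha : ∀ n : ℕ, a n = ⌊((n : ℝ) + 1) * α + β⌋ - ⌊(n : ℝ) * α + β⌋) :
    ∃ C : ℕ, ∀ (n i j : ℕ), (∀ t < n, x (i + t) = a (j + t)) → n ≤ C :=
  automatic_sturmian_common_factor_bounded_general k hk x hkernel α β hα a ha
end

section
/- Let α be irrational with 0 < α < 1, let 0 ≤ β < 1, and let a : ℕ → ℤ be the Sturmian sequence a(n) = ⌊(n+1)α + β⌋ − ⌊nα + β⌋. Then for every integer k ≥ 2, the sequence a is not k-automatic; equivalently, its k-kernel { (a(n·k^r + s))_{n ≥ 0} : r ≥ 0, 0 ≤ s < k^r } is infinite. -/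
/-!
For each `r`, the `k ^ r` kernel elements `n ↦ a (n * k ^ r + s)` with `s < k ^ r` are pairwise
distinct. Indeed `a m = ⌊fract (m α + β) + α⌋` codes the interval `[1 - α, 1)` along the orbit
of `β` under rotation by `α`, so for `s ≠ s'` these two sequences are the codings along the
orbit of the rotation by `k ^ r α` started at `s α + β` and at `s α + β + (s' - s) α`. This orbit
is dense, and `(s' - s) α` is not an integer, so some orbit point lies in `[1 - α, 1)` while its
translate by `(s' - s) α` does not.
-/

open Set

lemma Irrational.exists_nat_fract_mul_add_mem_Ioo {θ : ℝ} (hθ : Irrational θ) (c : ℝ)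
    {u v : ℝ} (hu : 0 ≤ u) (huv : u < v) (hv : v ≤ 1) :
    ∃ n : ℕ, Int.fract (n * θ + c) ∈ Ioo u v := by
  have hdense : DenseRange (fun n : ℕ => n • (θ : AddCircle (1 : ℝ))) := by
    rw [← denseRange_zsmul_iff_nsmul, AddCircle.denseRange_zsmul_coe_iff, div_one]
    exact hθ
  have hopen : IsOpen ((· + (c : AddCircle (1 : ℝ))) ⁻¹' ((↑) '' Ioo u v)) :=
    (QuotientAddGroup.isOpenMap_coe _ isOpen_Ioo).preimage (continuous_add_const _)
  obtain ⟨n, y, hy, hyn⟩ := hdense.exists_mem_open hopen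
    ⟨(((u + v) / 2 - c : ℝ) : AddCircle (1 : ℝ)),
      (u + v) / 2, ⟨by linarith, by linarith⟩, by simp⟩
  refine ⟨n, ?_⟩
  convert hy
  rw [← AddCircle.coe_eq_coe_iff_of_mem_Ico (p := 1) (a := 0)
    ⟨Int.fract_nonneg _, by simpa using Int.fract_lt_one _⟩
    ⟨by linarith [hy.1], by linarith [hy.2]⟩]
  simp [hyn]

lemma Int.floor_add_sub_floor {R : Type*} [Ring R] [LinearOrder R] [IsOrderedRing R]
    [FloorRing R] (x y : R) : ⌊x + y⌋ - ⌊x⌋ = ⌊Int.fract x + y⌋ := by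
  rw [Int.fract, sub_add_eq_add_sub, Int.floor_sub_intCast]

lemma Irrational.exists_floor_fract_add_ne {θ α δ : ℝ} (hθ : Irrational θ) (c : ℝ)
    (hα0 : 0 < α) (hα1 : α < 1) (hδ : 0 < Int.fract δ) :
    ∃ n : ℕ, ⌊Int.fract (n * θ + c) + α⌋ ≠ ⌊Int.fract (n * θ + c + δ) + α⌋ := by
  have hδ1 : Int.fract δ < 1 := Int.fract_lt_one δ
  -- we want `fract y ∈ [1 - α, 1)` but `fract y + fract δ ∈ [1, 2 - α)`
  obtain ⟨n, hxu, hxv⟩ := hθ.exists_nat_fract_mul_add_mem_Ioo c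
    (u := max (1 - α) (1 - Int.fract δ)) (v := min 1 (2 - α - Int.fract δ))
    (by positivity)
    (max_lt (lt_min (by linarith) (by linarith)) (lt_min (by linarith) (by linarith)))
    (min_le_left _ _)
  set y := n * θ + c
  simp only [max_lt_iff, lt_min_iff] at hxu hxv
  have hshift : Int.fract (y + δ) = Int.fract y + Int.fract δ - 1 := by
    have hmem : 0 ≤ Int.fract y + Int.fract δ - 1 ∧ Int.fract y + Int.fract δ - 1 < 1 :=
      ⟨by linarith, by linarith⟩
    rw [← Int.fract_eq_self.2 hmem, Int.fract_eq_fract]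
    refine ⟨⌊y⌋ + ⌊δ⌋ + 1, ?_⟩
    push_cast
    linarith [Int.floor_add_fract y, Int.floor_add_fract δ]
  have hy : ⌊Int.fract y + α⌋ = 1 := by
    rw [Int.floor_eq_iff]; push_cast; constructor <;> linarith
  have hyδ : ⌊Int.fract y + Int.fract δ - 1 + α⌋ = 0 :=
    Int.floor_eq_zero_iff.2 ⟨by linarith, by linarith⟩
  exact ⟨n, by rw [hshift, hy, hyδ]; decide⟩

section Sturmian

variable {α β : ℝ} {a : ℕ → ℤ}

lemma sturmian_eq_floor_fract_add
    (ha : ∀ n : ℕ, a n = ⌊((n : ℝ) + 1) * α + β⌋ - ⌊(n : ℝ) * α + β⌋) (m : ℕ) :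
    a m = ⌊Int.fract (m * α + β) + α⌋ := by
  rw [ha, ← Int.floor_add_sub_floor]
  ring_nf

lemma sturmian_injective_shift
    (ha : ∀ n : ℕ, a n = ⌊((n : ℝ) + 1) * α + β⌋ - ⌊(n : ℝ) * α + β⌋)
    (hα : Irrational α) (hα0 : 0 < α) (hα1 : α < 1) {M : ℕ} (hM : M ≠ 0) :
    Function.Injective fun s n => a (n * M + s) := by
  intro s s' hss'
  by_contra hne
  have hδ : 0 < Int.fract (((s' - s : ℤ) : ℝ) * α) :=
    Int.fract_pos.2 ((hα.intCast_mul (sub_ne_zero.2 (by exact_mod_cast Ne.symm hne))).ne_int _)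
  obtain ⟨n, hn⟩ := (hα.natCast_mul hM).exists_floor_fract_add_ne (s * α + β) hα0 hα1 hδ
  have hn' := congrFun hss' n
  simp only [sturmian_eq_floor_fract_add ha] at hn'
  exact hn (by convert hn' using 4 <;> push_cast <;> ring)

end Sturmian

theorem sturmian_not_automatic_general
    (α β : ℝ) (hα : Irrational α) (hα0 : 0 < α) (hα1 : α < 1)
    (a : ℕ → ℤ)
    (ha : ∀ n : ℕ, a n = ⌊((n : ℝ) + 1) * α + β⌋ - ⌊(n : ℝ) * α + β⌋) :
    ∀ k : ℕ, 2 ≤ k →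
      {g : ℕ → ℤ | ∃ r s : ℕ, s < k ^ r ∧
        g = fun n => a (n * k ^ r + s)}.Infinite := by
  intro k hk hfin
  set K := {g : ℕ → ℤ | ∃ r s : ℕ, s < k ^ r ∧ g = fun n => a (n * k ^ r + s)}
  have hcard (r : ℕ) : k ^ r ≤ K.ncard := by
    have hinj := sturmian_injective_shift ha hα hα0 hα1 (pow_ne_zero r (by omega : k ≠ 0))
    calc k ^ r = ((fun s n => a (n * k ^ r + s)) '' Iio (k ^ r)).ncard := by
          rw [ncard_image_of_injective _ hinj, ncard_Iio_nat]
      _ ≤ K.ncard := ncard_le_ncard (image_subset_iff.2 fun s hs => ⟨r, s, hs, rfl⟩) hfin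
  exact (Nat.lt_pow_self hk).not_ge (hcard _)

/-- A Sturmian sequence `a n = ⌊(n+1)α + β⌋ - ⌊nα + β⌋` (with `α` irrational,
`0 < α < 1`, `0 ≤ β < 1`) is not `k`-automatic for any `k ≥ 2`: its `k`-kernel
is infinite. -/
theorem sturmian_not_automatic
    (α β : ℝ) (hα : Irrational α) (hα0 : 0 < α) (hα1 : α < 1)
    (hβ0 : 0 ≤ β) (hβ1 : β < 1)
    (a : ℕ → ℤ)
    (ha : ∀ n : ℕ, a n = ⌊((n : ℝ) + 1) * α + β⌋ - ⌊(n : ℝ) * α + β⌋) :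
    ∀ k : ℕ, 2 ≤ k →
      {g : ℕ → ℤ | ∃ r s : ℕ, s < k ^ r ∧
        g = fun n => a (n * k ^ r + s)}.Infinite :=
  sturmian_not_automatic_general α β hα hα0 hα1 a ha
end

section
/- Let α be irrational with 0 < α < 1, let k ≥ 2 and r ≥ 0 be integers, and let d₁, d₂ be positive integers with fractional parts {d₁α} ≠ {d₂α}. Then there exists a positive integer M such that every set of M consecutive nonnegative integers contains an integer N for which exactly one of the two inequalities {(N·k^r + d₁)α} < α and {(N·k^r + d₂)α} < α holds. -/
/-!
Put `γ = k ^ r * α` and `δ = {(d₂ - d₁) α}`, so `0 < δ < 1`. With `u = {N γ + d₁ α}` the two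
conditions read `u < α` and `{u + δ} < α`, and they disagree for every `u` in a nonempty open
interval. An irrational rotation enters any such interval within boundedly many steps: by
Dirichlet some `q γ` lies within less than the interval's length of an integer, and steps of `q`
move `u` monotonically around the circle by that small nonzero amount.
-/

open Set

section FloorField

variable {K : Type*} [Field K] [LinearOrder K] [IsStrictOrderedRing K] [FloorRing K]

lemma Int.fract_add_eq_fract_fract_add_fract (x y : K) :
    Int.fract (x + y) = Int.fract (Int.fract x + Int.fract y) :=
  Int.fract_eq_fract.2
    ⟨⌊x⌋ + ⌊y⌋, by push_cast; rw [← Int.self_sub_floor, ← Int.self_sub_floor]; ring⟩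

lemma Int.fract_sub_pos_of_fract_ne {a b : K} (h : Int.fract a ≠ Int.fract b) :
    0 < Int.fract (b - a) := by
  refine (Int.fract_nonneg _).lt_of_ne fun h0 => h ?_
  obtain ⟨z, hz⟩ := Int.fract_eq_zero_iff.1 h0.symm
  exact Int.fract_eq_fract.2 ⟨-z, by push_cast; linarith⟩

lemma exists_nat_add_mul_mem_Ioo {a b t x : K} (hx : 0 < x) (hxab : x < b - a) (hta : t ≤ a) :
    ∃ j : ℕ, t + j * x ∈ Ioo a b := by
  have hlt := Nat.lt_floor_add_one ((a - t) / x)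
  have hle := Nat.floor_le (div_nonneg (sub_nonneg.2 hta) hx.le)
  rw [div_lt_iff₀ hx] at hlt
  rw [le_div_iff₀ hx] at hle
  exact ⟨⌊(a - t) / x⌋₊ + 1, by push_cast; constructor <;> linarith⟩

lemma exists_nat_fract_add_mul_mem_Ioo {a b x : K} (ha : 0 ≤ a) (hb : b ≤ 1) (hx₀ : x ≠ 0)
    (hxab : |x| < b - a) (t : K) :
    ∃ j : ℕ, j * |x| < 2 ∧ Int.fract (t + j * x) ∈ Ioo a b := by
  -- Start from `t + z` in `[-1, 0)` when `x > 0`, in `[1, 2)` when `x < 0`,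
  -- and walk towards `Ioo a b`.
  have hfract_eq : ∀ (z : ℤ) (j : ℕ), t + z + j * x ∈ Ioo a b →
      Int.fract (t + j * x) = t + z + j * x := by
    intro z j h
    rw [← Int.fract_add_intCast _ z, add_right_comm]
    exact Int.fract_eq_self.2 ⟨by linarith [h.1], by linarith [h.2]⟩
  have h0 := Int.fract_nonneg t
  have h1 := Int.fract_lt_one t
  rw [← Int.self_sub_floor] at h0 h1
  rcases hx₀.lt_or_gt with hneg | hpos
  · rw [abs_of_neg hneg] at hxab ⊢
    obtain ⟨j, hj⟩ := exists_nat_add_mul_mem_Ioo (t := -(t + (1 - ⌊t⌋ : ℤ)))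
      (neg_pos.2 hneg) (show -x < -a - -b by linarith) (by push_cast; linarith)
    have hj' : t + (1 - ⌊t⌋ : ℤ) + j * x ∈ Ioo a b := by
      push_cast at hj ⊢; constructor <;> linarith [hj.1, hj.2]
    refine ⟨j, ?_, by rwa [hfract_eq _ _ hj']⟩
    push_cast at hj'
    linarith [hj'.1]
  · rw [abs_of_pos hpos] at hxab ⊢
    obtain ⟨j, hj⟩ := exists_nat_add_mul_mem_Ioo (t := t + (-1 - ⌊t⌋ : ℤ)) hpos hxab
      (by push_cast; linarith)
    refine ⟨j, ?_, by rwa [hfract_eq _ _ hj]⟩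
    push_cast at hj
    linarith [hj.2]

lemma exists_Ioo_forall_lt_and_le_fract_add {α δ : K} (hα₀ : 0 < α) (hα₁ : α < 1) (hδ₀ : 0 < δ)
    (hδ₁ : δ < 1) :
    ∃ a b : K, 0 ≤ a ∧ a < b ∧ b ≤ 1 ∧ ∀ u ∈ Ioo a b, u < α ∧ α ≤ Int.fract (u + δ) := by
  refine ⟨max 0 (α - δ), min α (1 - δ), le_max_left _ _, ?_, ?_, fun u ⟨hau, hub⟩ => ?_⟩
  · exact max_lt (lt_min hα₀ (by linarith)) (lt_min (by linarith) (by linarith))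
  · exact (min_le_left _ _).trans hα₁.le
  · rw [max_lt_iff] at hau
    rw [lt_min_iff] at hub
    rw [Int.fract_eq_self.2 ⟨by linarith, by linarith⟩]
    exact ⟨hub.1, by linarith⟩

end FloorField

theorem Irrational.exists_forall_exists_lt_fract_add_mul_mem_Ioo {γ a b : ℝ} (hγ : Irrational γ)
    (ha : 0 ≤ a) (hab : a < b) (hb : b ≤ 1) :
    ∃ M : ℕ, ∀ t : ℝ, ∃ j < M, Int.fract (t + j * γ) ∈ Ioo a b := by
  obtain ⟨n, hn⟩ := exists_nat_one_div_lt (sub_pos.2 hab)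
  obtain ⟨q, hq, -, hqγ⟩ := Real.exists_nat_abs_mul_sub_round_le γ n.succ_pos
  set x := q * γ - round (q * γ)
  have hx₀ : x ≠ 0 := sub_ne_zero.2 ((hγ.natCast_mul hq.ne').ne_int _)
  have hxab : |x| < b - a := by
    refine hqγ.trans_lt (lt_of_le_of_lt ?_ hn)
    gcongr
    linarith
  refine ⟨⌈2 / |x|⌉₊ * q, fun t => ?_⟩
  obtain ⟨j, hj2, hj⟩ := exists_nat_fract_add_mul_mem_Ioo ha hb hx₀ hxab t
  refine ⟨j * q, Nat.mul_lt_mul_of_pos_right ?_ hq, ?_⟩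
  · rw [Nat.lt_ceil, lt_div_iff₀ (abs_pos.2 hx₀)]
    exact hj2
  · have hstep : t + (j * q : ℕ) * γ = t + j * x + (j * round (q * γ) : ℤ) := by
      simp only [x]
      push_cast
      ring
    rwa [hstep, Int.fract_add_intCast]

theorem sturmian_disagreement_syndetic_general
    (α : ℝ) (hα : Irrational α) (hα0 : 0 < α) (hα1 : α < 1)
    (k r : ℕ) (hk : 2 ≤ k)
    (d₁ d₂ : ℕ)
    (hfract : Int.fract ((d₁ : ℝ) * α) ≠ Int.fract ((d₂ : ℝ) * α)) :
    ∃ M : ℕ, 0 < M ∧ ∀ n₀ : ℕ, ∃ N : ℕ, n₀ ≤ N ∧ N < n₀ + M ∧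
      Xor' (Int.fract ((((N * k ^ r + d₁ : ℕ) : ℝ)) * α) < α)
           (Int.fract ((((N * k ^ r + d₂ : ℕ) : ℝ)) * α) < α) := by
  set γ : ℝ := (k ^ r : ℕ) * α
  have hγ : Irrational γ := hα.natCast_mul (pow_ne_zero r (by omega : k ≠ 0))
  obtain ⟨a, b, ha, hab, hb, hwindow⟩ := exists_Ioo_forall_lt_and_le_fract_add hα0 hα1
    (Int.fract_sub_pos_of_fract_ne hfract) (Int.fract_lt_one _)
  obtain ⟨M, hM⟩ := hγ.exists_forall_exists_lt_fract_add_mul_mem_Ioo ha hab hb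
  obtain ⟨j₀, hj₀, -⟩ := hM 0
  refine ⟨M, by omega, fun n₀ => ?_⟩
  obtain ⟨j, hjM, hj⟩ := hM (n₀ * γ + d₁ * α)
  have hcast (d : ℕ) : (((n₀ + j) * k ^ r + d : ℕ) : ℝ) * α
      = n₀ * γ + d₁ * α + j * γ + (d * α - d₁ * α) := by
    simp only [γ]; push_cast; ring
  refine ⟨n₀ + j, by omega, by omega, Or.inl ⟨?_, ?_⟩⟩
  · rw [hcast, sub_self, add_zero]
    exact (hwindow _ hj).1
  · rw [hcast, Int.fract_add_eq_fract_fract_add_fract, not_lt]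
    exact (hwindow _ hj).2

/-- Let `α` be irrational with `0 < α < 1`, let `k ≥ 2`, `r ≥ 0`, and let
`d₁, d₂` be positive integers with `{d₁α} ≠ {d₂α}`.  Then the set of `N` for
which exactly one of `{(N·k^r + d₁)α} < α` and `{(N·k^r + d₂)α} < α` holds is
syndetic: some window length `M` works for every block of `M` consecutive
nonnegative integers. -/
theorem sturmian_disagreement_syndetic
    (α : ℝ) (hα : Irrational α) (hα0 : 0 < α) (hα1 : α < 1)
    (k r : ℕ) (hk : 2 ≤ k)
    (d₁ d₂ : ℕ) (hd₁ : 0 < d₁) (hd₂ : 0 < d₂)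
    (hfract : Int.fract ((d₁ : ℝ) * α) ≠ Int.fract ((d₂ : ℝ) * α)) :
    ∃ M : ℕ, 0 < M ∧ ∀ n₀ : ℕ, ∃ N : ℕ, n₀ ≤ N ∧ N < n₀ + M ∧
      Xor' (Int.fract ((((N * k ^ r + d₁ : ℕ) : ℝ)) * α) < α)
           (Int.fract ((((N * k ^ r + d₂ : ℕ) : ℝ)) * α) < α) :=
  sturmian_disagreement_syndetic_general α hα hα0 hα1 k r hk d₁ d₂ hfract
end

section
/- Let θ be an irrational real number, let c be a real number, and let I ⊆ [0,1) be an interval of positive length. Then the set S = { n ∈ ℕ : {nθ + c} ∈ I } is syndetic: there exists a positive integer M such that every set of M consecutive nonnegative integers contains an element of S. -/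
/-!
On the circle `ℝ/ℤ` the forward multiples `n • θ` of an irrational `θ` are dense (the closures
of the `ℕ`- and `ℤ`-multiples agree in a compact group), so every orbit `x + n • θ` enters the
open image `U` of an open subinterval `(u, v)` of `I`. By compactness finitely many of the open
sets `{x | x + n • θ ∈ U}` already cover the circle, which bounds the waiting time uniformly
in `x`.
-/

open Set

theorem exists_forall_exists_lt_apply_mem {X : Type*} [TopologicalSpace X] [CompactSpace X]
    {g : ℕ → X → X} (hg : ∀ n, Continuous (g n)) {U : Set X} (hU : IsOpen U)
    (hhit : ∀ x, ∃ n, g n x ∈ U) : ∃ M, ∀ x, ∃ n < M, g n x ∈ U := by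
  obtain ⟨t, ht⟩ := isCompact_univ.elim_finite_subcover (fun n ↦ g n ⁻¹' U)
    (fun n ↦ hU.preimage (hg n)) fun x _ ↦ mem_iUnion.2 (hhit x)
  obtain ⟨M, hM⟩ := t.exists_nat_subset_range
  refine ⟨M, fun x ↦ ?_⟩
  obtain ⟨n, hnt, hn⟩ := mem_iUnion₂.1 (ht (mem_univ x))
  exact ⟨n, Finset.mem_range.1 (hM hnt), hn⟩

theorem DenseRange.exists_forall_exists_lt_add_nsmul_mem {G : Type*} [AddGroup G]
    [TopologicalSpace G] [ContinuousAdd G] [CompactSpace G] {a : G}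
    (ha : DenseRange fun n : ℕ ↦ n • a) {U : Set G} (hU : IsOpen U) (hne : U.Nonempty) :
    ∃ M : ℕ, ∀ x, ∃ n < M, x + n • a ∈ U := by
  refine exists_forall_exists_lt_apply_mem (fun n : ℕ ↦ continuous_add_const (n • a)) hU
    fun x ↦ ?_
  obtain ⟨y, hy⟩ := hne
  exact ha.exists_mem_open (hU.preimage (continuous_const_add x)) ⟨-x + y, by simpa using hy⟩

theorem Irrational.denseRange_nsmul_coe_addCircle {θ : ℝ} (hθ : Irrational θ) :
    DenseRange fun n : ℕ ↦ n • (θ : AddCircle (1 : ℝ)) :=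
  denseRange_zsmul_iff_nsmul.1 (AddCircle.denseRange_zsmul_coe_iff.2 (by simpa using hθ))

theorem Int.fract_eq_of_coe_addCircle_eq {w r : ℝ} (hw : w ∈ Ico 0 1)
    (h : (w : AddCircle (1 : ℝ)) = r) : Int.fract r = w := by
  rw [← AddCircle.coe_fract r] at h
  have hr : Int.fract r ∈ Ico (0 : ℝ) (0 + 1) := by
    rw [zero_add]; exact ⟨Int.fract_nonneg r, Int.fract_lt_one r⟩
  exact ((AddCircle.coe_eq_coe_iff_of_mem_Ico (by simpa using hw) hr).1 h).symm

/-- For `θ` irrational, `c` real, and `I ⊆ [0,1)` an interval of positive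
length (an order-connected set containing two distinct points), the set
`{ n : ℕ | {nθ + c} ∈ I }` is syndetic. -/
theorem fract_mem_interval_syndetic
    (θ : ℝ) (hθ : Irrational θ) (c : ℝ)
    (I : Set ℝ) (hI : I ⊆ Set.Ico (0 : ℝ) 1)
    (hconn : I.OrdConnected)
    (hlen : ∃ u ∈ I, ∃ v ∈ I, u < v) :
    ∃ M : ℕ, 0 < M ∧ ∀ n₀ : ℕ, ∃ n : ℕ, n₀ ≤ n ∧ n < n₀ + M ∧
      Int.fract ((n : ℝ) * θ + c) ∈ I := by
  obtain ⟨u, hu, v, hv, huv⟩ := hlen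
  have hIoo : Ioo u v ⊆ I := Ioo_subset_Icc_self.trans (hconn.out hu hv)
  obtain ⟨M, hM⟩ := DenseRange.exists_forall_exists_lt_add_nsmul_mem
    hθ.denseRange_nsmul_coe_addCircle (QuotientAddGroup.isOpenMap_coe _ isOpen_Ioo)
    ((nonempty_Ioo.2 huv).image _)
  refine ⟨M, (hM 0).elim fun n hn ↦ n.zero_le.trans_lt hn.1, fun n₀ ↦ ?_⟩
  obtain ⟨n, hnM, w, hw, hwn⟩ := hM ((n₀ * θ + c : ℝ) : AddCircle (1 : ℝ))
  refine ⟨n₀ + n, by omega, by omega, ?_⟩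
  rw [← AddCircle.coe_nsmul, ← AddCircle.coe_add] at hwn
  rw [Int.fract_eq_of_coe_addCircle_eq (hI (hIoo hw)) (by rw [hwn]; push_cast; ring_nf)]
  exact hIoo hw
end

section
/- Let t : ℕ → ℕ be the Thue–Morse sequence, where t(n) is the parity (0 or 1) of the number of 1's in the binary representation of n, and let f : ℕ → ℤ be the Fibonacci word, defined by f(n) = ⌊(n+2)·(1/φ)⌋ − ⌊(n+1)·(1/φ)⌋ where φ = (1+√5)/2. Then every common factor of t and f has length at most 8: if there exist indices i, j with t(i+s) = f(j+s) for all 0 ≤ s < L, then L ≤ 8. -/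
/-!
Split the Thue–Morse word into aligned blocks `t (2n) t (2n+1)`, each containing exactly one `1`.
A window of length five starting at `2n` therefore holds `2 + t (n + 2)` ones, and one starting
at `2n + 1` holds `3 - t n`. Since `t` has no three equal consecutive letters, every factor of
length nine contains a window of length five with at most two ones. In the Fibonacci word
`f n = ⌊(n+2)/φ⌋ - ⌊(n+1)/φ⌋` the sum over a window of length five telescopes to a difference
of floors, which is at least `⌊5/φ⌋ = 3`.
-/

open Finset Real

def thueMorse (n : ℕ) : ℕ := (Nat.digits 2 n).count 1 % 2

theorem thueMorse_le_one (n : ℕ) : thueMorse n ≤ 1 :=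
  Nat.lt_succ_iff.mp (Nat.mod_lt _ two_pos)

theorem thueMorse_two_mul (n : ℕ) : thueMorse (2 * n) = thueMorse n := by
  rcases n.eq_zero_or_pos with rfl | hn
  · rfl
  · unfold thueMorse
    rw [← zero_add (2 * n), Nat.digits_add 2 one_lt_two 0 n two_pos (Or.inr hn.ne')]
    simp

theorem thueMorse_two_mul_add_one (n : ℕ) : thueMorse (2 * n + 1) + thueMorse n = 1 := by
  unfold thueMorse
  rw [add_comm (2 * n), Nat.digits_add 2 one_lt_two 1 n one_lt_two (Or.inl one_ne_zero),
    List.count_cons_self]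
  omega

theorem thueMorse_two_mul_add_thueMorse_two_mul_add_one (n : ℕ) :
    thueMorse (2 * n) + thueMorse (2 * n + 1) = 1 := by
  rw [thueMorse_two_mul, add_comm, thueMorse_two_mul_add_one]

theorem thueMorse_exists_ne (n b : ℕ) : ∃ r < 3, thueMorse (n + r) ≠ b := by
  by_contra! h
  obtain ⟨m, rfl | rfl⟩ := n.even_or_odd'
  · have := thueMorse_two_mul_add_thueMorse_two_mul_add_one m
    have h0 := h 0 (by norm_num)
    have h1 := h 1 (by norm_num)
    simp only [add_zero] at h0
    omega
  · have := thueMorse_two_mul_add_thueMorse_two_mul_add_one (m + 1)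
    have h1 := h 1 (by norm_num)
    have h2 := h 2 (by norm_num)
    rw [show 2 * m + 1 + 1 = 2 * (m + 1) by ring] at h1
    rw [show 2 * m + 1 + 2 = 2 * (m + 1) + 1 by ring] at h2
    omega

theorem thueMorse_window_two_mul (n : ℕ) :
    ∑ s ∈ range 5, thueMorse (2 * n + s) = 2 + thueMorse (n + 2) := by
  have h0 := thueMorse_two_mul_add_thueMorse_two_mul_add_one n
  have h1 := thueMorse_two_mul_add_thueMorse_two_mul_add_one (n + 1)
  have h2 := thueMorse_two_mul (n + 2)
  simp only [sum_range_succ, sum_range_zero, mul_add, mul_one, add_assoc, add_zero, zero_add,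
    Nat.reduceAdd, Nat.reduceMul] at *
  omega

theorem thueMorse_window_two_mul_add_one (n : ℕ) :
    ∑ s ∈ range 5, thueMorse (2 * n + 1 + s) + thueMorse n = 3 := by
  have h0 := thueMorse_two_mul_add_one n
  have h1 := thueMorse_two_mul_add_thueMorse_two_mul_add_one (n + 1)
  have h2 := thueMorse_two_mul_add_thueMorse_two_mul_add_one (n + 2)
  simp only [sum_range_succ, sum_range_zero, mul_add, mul_one, add_assoc, add_zero, zero_add,
    Nat.reduceAdd, Nat.reduceMul] at *
  omega

theorem thueMorse_exists_window_sum_le_two (i : ℕ) :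
    ∃ k ≤ 4, ∑ s ∈ range 5, thueMorse (i + k + s) ≤ 2 := by
  obtain ⟨m, rfl | rfl⟩ := i.even_or_odd'
  · obtain ⟨r, hr, hne⟩ := thueMorse_exists_ne (m + 2) 1
    refine ⟨2 * r, by omega, ?_⟩
    rw [← mul_add, thueMorse_window_two_mul, add_right_comm]
    have := thueMorse_le_one (m + 2 + r)
    omega
  · obtain ⟨r, hr, hne⟩ := thueMorse_exists_ne m 0
    refine ⟨2 * r, by omega, ?_⟩
    have := thueMorse_window_two_mul_add_one (m + r)
    rw [show 2 * (m + r) + 1 = 2 * m + 1 + 2 * r by ring] at this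
    have := thueMorse_le_one (m + r)
    omega

noncomputable def mechanicalWord (α : ℝ) (n : ℕ) : ℤ := ⌊((n : ℝ) + 2) * α⌋ - ⌊((n : ℝ) + 1) * α⌋

theorem sum_range_mechanicalWord (α : ℝ) (a k : ℕ) :
    ∑ s ∈ range k, mechanicalWord α (a + s) = ⌊((a : ℝ) + k + 1) * α⌋ - ⌊((a : ℝ) + 1) * α⌋ := by
  convert sum_range_sub (fun s : ℕ ↦ ⌊((a : ℝ) + s + 1) * α⌋) k using 2 with s
  · unfold mechanicalWord
    push_cast
    ring_nf
  · simp

theorem floor_mul_le_sum_range_mechanicalWord (α : ℝ) (a k : ℕ) :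
    ⌊(k : ℝ) * α⌋ ≤ ∑ s ∈ range k, mechanicalWord α (a + s) := by
  rw [sum_range_mechanicalWord, show ((a : ℝ) + k + 1) * α = k * α + (a + 1) * α by ring]
  linarith [Int.le_floor_add ((k : ℝ) * α) ((a + 1) * α)]

theorem three_le_five_mul_inv_goldenRatio : 3 ≤ 5 * goldenRatio⁻¹ := by
  have h5 : (11 / 5 : ℝ) ≤ √5 := Real.le_sqrt_of_sq_le (by norm_num)
  rw [inv_goldenRatio, goldenConj]
  linarith

/-- Every common factor of the Thue–Morse sequence `t` (with `t n` the parity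
of the number of `1`'s in the binary representation of `n`) and the Fibonacci
word `f n = ⌊(n+2)/φ⌋ - ⌊(n+1)/φ⌋` (with `φ = (1+√5)/2`) has length at
most `8`. -/
theorem thueMorse_fibonacci_common_factor_le_eight
    (t : ℕ → ℕ) (ht : ∀ n : ℕ, t n = (Nat.digits 2 n).count 1 % 2)
    (φ : ℝ) (hφ : φ = (1 + Real.sqrt 5) / 2)
    (f : ℕ → ℤ)
    (hf : ∀ n : ℕ, f n = ⌊((n : ℝ) + 2) * φ⁻¹⌋ - ⌊((n : ℝ) + 1) * φ⁻¹⌋) :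
    ∀ (L i j : ℕ), (∀ s < L, (t (i + s) : ℤ) = f (j + s)) → L ≤ 8 := by
  obtain rfl : t = thueMorse := funext ht
  obtain rfl : f = mechanicalWord φ⁻¹ := funext hf
  obtain rfl : φ = goldenRatio := hφ
  intro L i j h
  by_contra! hL
  obtain ⟨k, hk, hsparse⟩ := thueMorse_exists_window_sum_le_two i
  have hwindow : ∑ s ∈ range 5, (thueMorse (i + k + s) : ℤ) =
      ∑ s ∈ range 5, mechanicalWord goldenRatio⁻¹ (j + k + s) :=
    sum_congr rfl fun s hs ↦ by
      rw [add_assoc, add_assoc]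
      exact h _ (by simp only [mem_range] at hs; omega)
  have hdense : 3 ≤ ∑ s ∈ range 5, mechanicalWord goldenRatio⁻¹ (j + k + s) :=
    (Int.le_floor.mpr (mod_cast three_le_five_mul_inv_goldenRatio)).trans
      (floor_mul_le_sum_range_mechanicalWord _ _ 5)
  have : (∑ s ∈ range 5, (thueMorse (i + k + s) : ℤ)) ≤ 2 := mod_cast hsparse
  omega
end
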